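/- Let |a|, |b|, |c|, |d| < 1 and suppose the five points p₁ = (0,0), p₂ = (1,a), p₃ = (1+b, 1+a), p₄ = (b, 1+a+c), p₅ = (b+d, a+c) satisfy d_∞(p₁,p₃) = d_∞(p₂,p₄) = d_∞(p₃,p₅) (common second-order distance d₂ with d₂ ≠ 1) and d_∞(p₁,p₄) = d_∞(p₂,p₅) (common third-order distance d₃ with d₃ ≠ 1). Then a = c = −b = −d. -/
import Mathlib


/-- The Chebyshev (L∞) distance on ℝ². -/
noncomputable def dinf (p q : ℝ × ℝ) : ℝ := max |p.1 - q.1| |p.2 - q.2|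

/-- Rigidity of the type xyx′y′: if the points (0,0), (1,a), (1+b,1+a),
(b,1+a+c), (b+d,a+c) have a common second-order distance d₂ ≠ 1 and a common
third-order distance d₃ ≠ 1, then a = c = −b = −d. -/
theorem xyx'y'_rigid (a b c d : ℝ)
    (ha : |a| < 1) (hb : |b| < 1) (hc : |c| < 1) (hd : |d| < 1)
    (h2 : dinf (0, 0) (1 + b, 1 + a) = dinf (1, a) (b, 1 + a + c))
    (h2' : dinf (1, a) (b, 1 + a + c) = dinf (1 + b, 1 + a) (b + d, a + c))
    (h2ne : dinf (0, 0) (1 + b, 1 + a) ≠ 1)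
    (h3 : dinf (0, 0) (b, 1 + a + c) = dinf (1, a) (b + d, a + c))
    (h3ne : dinf (0, 0) (b, 1 + a + c) ≠ 1) :
    a = c ∧ a = -b ∧ a = -d := by
  have hb1 : |b| < 1 := hb
  rw [abs_lt] at ha hb hc hd
  have e1 : dinf (0, 0) (1 + b, 1 + a) = max (1+b) (1+a) := by
    unfold dinf; simp only
    rw [show (0:ℝ) - (1+b) = -(1+b) by ring, show (0:ℝ) - (1+a) = -(1+a) by ring,
      abs_neg, abs_neg, abs_of_pos (by linarith), abs_of_pos (by linarith)]
  have e2 : dinf (1, a) (b, 1 + a + c) = max (1-b) (1+c) := by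
    unfold dinf; simp only
    rw [show a - (1+a+c) = -(1+c) by ring, abs_neg,
      abs_of_pos (show (0:ℝ) < 1 - b by linarith), abs_of_pos (by linarith)]
  have e3 : dinf (1 + b, 1 + a) (b + d, a + c) = max (1-d) (1-c) := by
    unfold dinf; simp only
    rw [show 1 + b - (b+d) = 1-d by ring, show 1 + a - (a+c) = 1-c by ring,
      abs_of_pos (by linarith), abs_of_pos (by linarith)]
  have e4 : dinf (0, 0) (b, 1 + a + c) = max |b| |1+a+c| := by
    unfold dinf; simp only
    rw [show (0:ℝ) - b = -b by ring, show (0:ℝ) - (1+a+c) = -(1+a+c) by ring,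
      abs_neg, abs_neg]
  have e5 : dinf (1, a) (b + d, a + c) = max |1-(b+d)| |c| := by
    unfold dinf; simp only
    rw [show a - (a+c) = -c by ring, abs_neg]
  rw [e1] at h2 h2ne
  rw [e2] at h2 h2'
  rw [e3] at h2'
  rw [e4] at h3 h3ne
  rw [e5] at h3
  -- D₂ ≥ 1 since D₂ ≥ 1+b and D₂ ≥ 1-b
  have hDge : (1:ℝ) ≤ max (1+b) (1+a) := by
    have t1 := le_max_left (1+b) (1+a)
    have t2 := le_max_left (1-b) (1+c)
    rw [← h2] at t2
    linarith
  have hD : 1 < max (1+b) (1+a) := lt_of_le_of_ne hDge (Ne.symm h2ne)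
  have hcle : |c| ≤ 1 := by rw [abs_le]; constructor <;> linarith
  rcases max_cases (1+b) (1+a) with ⟨hm1, hs1⟩ | ⟨hm1, hs1⟩
  · -- D₂ = 1+b, so b > 0; forces c = b, d = -b, then d₃ = 1: contradiction
    have hbpos : 0 < b := by linarith
    have hc2 : c = b := by
      rcases max_cases (1-b) (1+c) with ⟨hm2, hs2⟩ | ⟨hm2, hs2⟩ <;> linarith
    have hd2 : d = -b := by
      rcases max_cases (1-d) (1-c) with ⟨hm3, hs3⟩ | ⟨hm3, hs3⟩ <;> linarith
    exfalso
    apply h3ne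
    rw [h3, show 1-(b+d) = (1:ℝ) by rw [hd2]; ring, abs_one, max_eq_left hcle]
  · -- D₂ = 1+a, a > 0
    have hapos : 0 < a := by linarith
    rcases max_cases (1-b) (1+c) with ⟨hm2, hs2⟩ | ⟨hm2, hs2⟩ <;>
      rcases max_cases (1-d) (1-c) with ⟨hm3, hs3⟩ | ⟨hm3, hs3⟩
    · -- b = -a, d = -a; third-order gives c = a
      have hb' : b = -a := by linarith
      have hd' : d = -a := by linarith
      have hcge : -a ≤ c := by linarith
      have hcle' : c ≤ a := by linarith
      have l1 : |b| = a := by rw [hb', abs_neg, abs_of_pos hapos]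
      have l2 : |1+a+c| = 1+a+c := abs_of_pos (by linarith)
      have l3 : |1-(b+d)| = 1+2*a := by
        rw [show 1-(b+d) = 1+2*a by rw [hb', hd']; ring, abs_of_pos (by linarith)]
      rw [l1, l2, l3, max_eq_right (by linarith), max_eq_left (by linarith)] at h3
      exact ⟨by linarith, by linarith, by linarith⟩
    · -- b = -a, c = -a: then d₃ = 1, contradiction
      exfalso
      have hb' : b = -a := by linarith
      have hc' : c = -a := by linarith
      apply h3ne
      rw [show (1:ℝ)+a+c = 1 by rw [hc']; ring, abs_one, max_eq_right (le_of_lt hb1)]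
    · -- c = a, d = -a; third-order gives b = -a
      have hc' : c = a := by linarith
      have hd' : d = -a := by linarith
      have l2 : |1+a+c| = 1+2*a := by
        rw [show (1:ℝ)+a+c = 1+2*a by rw [hc']; ring, abs_of_pos (by linarith)]
      have l3 : |1-(b+d)| = 1+a-b := by
        rw [show 1-(b+d) = 1+a-b by rw [hd']; ring, abs_of_pos (by linarith)]
      have l4 : |c| = a := by rw [hc', abs_of_pos hapos]
      rw [l2, l3, l4, max_eq_right (by linarith), max_eq_left (by linarith)] at h3
      exact ⟨by linarith, by linarith, by linarith⟩
    · -- c = a and c = -a: a = 0, contradicts a > 0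
      exact ⟨by linarith, by linarith, by linarith⟩
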